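/- arXiv:2111.13551 — 4 statements merged into one kernel-verified Lean document; each statement's English description precedes it below -/
import Mathlib

section
/- Let C₁ be an r×s real matrix and C₂ an s×t real matrix, each with nonnegative entries, each row and each column having ℓ₂-norm at most 1, and Frobenius norm at most √q, for some real q ≥ 1. Then the rescaled product q^{-1/2} · C₁C₂ also has nonnegative entries, every row and column with ℓ₂-norm at most 1, and Frobenius norm at most √q. -/
open Matrix

/-- Frobenius norm of a real rectangular matrix. -/
noncomputable def frobNorm {r s : ℕ} (C : Matrix (Fin r) (Fin s) ℝ) : ℝ :=
  Real.sqrt (∑ i, ∑ j, C i j ^ 2)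

/-- Condition (ℬ*) with parameter `q`: nonnegative entries, all rows and columns with
ℓ₂-norm at most one, Frobenius norm at most `√q`. -/
def BStar {r s : ℕ} (q : ℝ) (C : Matrix (Fin r) (Fin s) ℝ) : Prop :=
  (∀ i j, 0 ≤ C i j) ∧
  (∀ i, Real.sqrt (∑ j, C i j ^ 2) ≤ 1) ∧
  (∀ j, Real.sqrt (∑ i, C i j ^ 2) ≤ 1) ∧
  frobNorm C ≤ Real.sqrt q

/-- If `C₁` and `C₂` both satisfy condition (ℬ*), then so does `q^{-1/2} • (C₁ * C₂)`. -/
theorem bstar_mul {r s t : ℕ} (q : ℝ) (hq : 1 ≤ q)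
    (C₁ : Matrix (Fin r) (Fin s) ℝ) (C₂ : Matrix (Fin s) (Fin t) ℝ)
    (h₁ : BStar q C₁) (h₂ : BStar q C₂) :
    BStar q ((Real.sqrt q)⁻¹ • (C₁ * C₂)) := by
  obtain ⟨h1n, h1r, h1c, h1f⟩ := h₁
  obtain ⟨h2n, h2r, h2c, h2f⟩ := h₂
  have hq0 : (0:ℝ) < q := lt_of_lt_of_le one_pos hq
  have hsq : (0:ℝ) < Real.sqrt q := Real.sqrt_pos.mpr hq0
  have sqrtq_sq : (Real.sqrt q) ^ 2 = q := Real.sq_sqrt hq0.le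
  have un_sq : ∀ {S : ℝ}, Real.sqrt S ≤ Real.sqrt q → S ≤ q := by
    intro S h
    rcases le_or_gt S 0 with hS | hS
    · linarith
    · nlinarith [Real.sq_sqrt hS.le, Real.sqrt_nonneg S]
  have un_one : ∀ {S : ℝ}, 0 ≤ S → Real.sqrt S ≤ 1 → S ≤ 1 := by
    intro S hS h
    nlinarith [Real.sq_sqrt hS, Real.sqrt_nonneg S]
  have h1r' : ∀ i, ∑ k, C₁ i k ^ 2 ≤ 1 := fun i =>
    un_one (Finset.sum_nonneg fun _ _ => sq_nonneg _) (h1r i)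
  have h2c' : ∀ j, ∑ k, C₂ k j ^ 2 ≤ 1 := fun j =>
    un_one (Finset.sum_nonneg fun _ _ => sq_nonneg _) (h2c j)
  have h1f' : ∑ i, ∑ k, C₁ i k ^ 2 ≤ q := un_sq h1f
  have h2f' : ∑ k, ∑ j, C₂ k j ^ 2 ≤ q := un_sq h2f
  have CS : ∀ i j, (∑ k, C₁ i k * C₂ k j) ^ 2 ≤ (∑ k, C₁ i k ^ 2) * (∑ k, C₂ k j ^ 2) :=
    fun i j => Finset.sum_mul_sq_le_sq_mul_sq _ _ _
  have entry : ∀ i j, ((Real.sqrt q)⁻¹ • (C₁ * C₂)) i j = (Real.sqrt q)⁻¹ * ∑ k, C₁ i k * C₂ k j := by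
    intro i j; simp [Matrix.mul_apply]
  have entry_sq : ∀ i j, (((Real.sqrt q)⁻¹ • (C₁ * C₂)) i j) ^ 2
      = q⁻¹ * (∑ k, C₁ i k * C₂ k j) ^ 2 := by
    intro i j
    rw [entry, mul_pow, inv_pow, sqrtq_sq]
  have prodnn : ∀ i j, 0 ≤ ∑ k, C₁ i k * C₂ k j := fun i j =>
    Finset.sum_nonneg fun k _ => mul_nonneg (h1n i k) (h2n k j)
  refine ⟨fun i j => ?_, fun i => ?_, fun j => ?_, ?_⟩
  · rw [entry]
    exact mul_nonneg (inv_nonneg.mpr hsq.le) (prodnn i j)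
  · -- row norm
    rw [show (1:ℝ) = Real.sqrt 1 from (Real.sqrt_one).symm]
    apply Real.sqrt_le_sqrt
    simp_rw [entry_sq]
    rw [← Finset.mul_sum]
    rw [inv_mul_le_iff₀ hq0, mul_one]
    calc ∑ j, (∑ k, C₁ i k * C₂ k j) ^ 2
        ≤ ∑ j, (∑ k, C₁ i k ^ 2) * (∑ k, C₂ k j ^ 2) :=
          Finset.sum_le_sum fun j _ => CS i j
      _ ≤ ∑ j, 1 * (∑ k, C₂ k j ^ 2) := by
          refine Finset.sum_le_sum fun j _ => ?_
          exact mul_le_mul_of_nonneg_right (h1r' i)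
            (Finset.sum_nonneg fun _ _ => sq_nonneg _)
      _ = ∑ k, ∑ j, C₂ k j ^ 2 := by
          simp_rw [one_mul]; exact Finset.sum_comm
      _ ≤ q := h2f'
  · -- column norm
    rw [show (1:ℝ) = Real.sqrt 1 from (Real.sqrt_one).symm]
    apply Real.sqrt_le_sqrt
    simp_rw [entry_sq]
    rw [← Finset.mul_sum]
    rw [inv_mul_le_iff₀ hq0, mul_one]
    calc ∑ i, (∑ k, C₁ i k * C₂ k j) ^ 2
        ≤ ∑ i, (∑ k, C₁ i k ^ 2) * (∑ k, C₂ k j ^ 2) :=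
          Finset.sum_le_sum fun i _ => CS i j
      _ ≤ ∑ i, (∑ k, C₁ i k ^ 2) * 1 := by
          refine Finset.sum_le_sum fun i _ => ?_
          exact mul_le_mul_of_nonneg_left (h2c' j)
            (Finset.sum_nonneg fun _ _ => sq_nonneg _)
      _ = ∑ i, ∑ k, C₁ i k ^ 2 := by simp
      _ ≤ q := h1f'
  · -- Frobenius norm
    unfold frobNorm
    apply Real.sqrt_le_sqrt
    simp_rw [entry_sq, ← Finset.mul_sum]
    rw [inv_mul_le_iff₀ hq0]
    calc ∑ i, ∑ j, (∑ k, C₁ i k * C₂ k j) ^ 2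
        ≤ ∑ i, ∑ j, (∑ k, C₁ i k ^ 2) * (∑ k, C₂ k j ^ 2) :=
          Finset.sum_le_sum fun i _ => Finset.sum_le_sum fun j _ => CS i j
      _ = (∑ i, ∑ k, C₁ i k ^ 2) * (∑ j, ∑ k, C₂ k j ^ 2) := by
          rw [Finset.sum_mul]
          refine Finset.sum_congr rfl fun i _ => ?_
          rw [Finset.mul_sum]
      _ ≤ q * q := by
          have hA : (0:ℝ) ≤ ∑ i, ∑ k, C₁ i k ^ 2 :=
            Finset.sum_nonneg fun _ _ => Finset.sum_nonneg fun _ _ => sq_nonneg _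
          have hB : (0:ℝ) ≤ ∑ j, ∑ k, C₂ k j ^ 2 :=
            Finset.sum_nonneg fun _ _ => Finset.sum_nonneg fun _ _ => sq_nonneg _
          have hB' : ∑ j, ∑ k, C₂ k j ^ 2 ≤ q := by
            rw [Finset.sum_comm]; exact h2f'
          exact mul_le_mul h1f' hB' hB hq0.le
      _ = q * q := rfl
end

section
/- Let W = Yᵀ Y − p I_q where Y = A + E, A ∈ ℝ^{p×q} deterministic and E an arbitrary p×q noise matrix. Let Π be an orthogonal projection of ℝ^p onto the column space of A. Then for each i = 1, …, q, |λ_i(W) − σ_i(A)²| ≤ 2 σ_i(A) ‖ΠE‖_∞ + ‖ΠE‖_∞² + ‖EᵀE − p I_q‖_∞, where λ_i(W) denotes the i-th largest eigenvalue of W. -/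
/-!
Since `Π` fixes the columns of `A` and is symmetric, `AᵀE = Aᵀ(ΠE)`; hence, with `B = ΠE`,
`W = (A + B)ᵀ(A + B) + (EᵀE - p I) - BᵀB`.

Everything then follows from one comparison principle of Courant–Fischer type: if self-adjoint
`T, T'` satisfy `⟪x, T' x⟫ ≤ f ⟪x, T x⟫` on unit vectors for a monotone `f`, then
`λᵢ(T') ≤ f (λᵢ(T))`, because the span of the top `i + 1` eigenvectors of `T'` and the span of the
bottom `n - i` eigenvectors of `T` meet in a unit vector. Applied to
`‖(A + B) x‖ ≤ ‖A x‖ + ‖B‖` it gives `|σᵢ(A + B) - σᵢ(A)| ≤ ‖B‖`; applied to the decomposition of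
`W` it puts `λᵢ(W)` within `‖EᵀE - p I‖` above and `‖EᵀE - p I‖ + ‖B‖²` below `σᵢ(A + B)²`.
-/

open Matrix

/-- Operator norm (largest singular value) of a real rectangular matrix. -/
noncomputable def opNorm {m n : ℕ} (A : Matrix (Fin m) (Fin n) ℝ) : ℝ :=
  ‖LinearMap.toContinuousLinearMap (Matrix.toEuclideanLin A)‖

/-- Singular values of a real `p×q` matrix (square roots of the eigenvalues of `AᵀA`). -/
noncomputable def singvals {p q : ℕ} (A : Matrix (Fin p) (Fin q) ℝ) : Fin q → ℝ :=
  fun i => Real.sqrt ((Matrix.isHermitian_conjTranspose_mul_self A).eigenvalues i)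

/-- `sortedDesc f i` is the `i`-th largest value of `f`. -/
noncomputable def sortedDesc {n : ℕ} (f : Fin n → ℝ) : Fin n → ℝ :=
  fun i => f (Tuple.sort f i.rev)

open Finset Module Submodule
open scoped RealInnerProductSpace

theorem Submodule.inf_ne_bot_of_finrank_lt_add {K V : Type*} [DivisionRing K] [AddCommGroup V]
    [Module K V] [FiniteDimensional K V] {U W : Submodule K V}
    (h : finrank K V < finrank K U + finrank K W) : U ⊓ W ≠ ⊥ := by
  intro hbot
  have := Submodule.finrank_sup_add_finrank_inf_eq U W
  rw [hbot, finrank_bot] at this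
  have := (U ⊔ W).finrank_le
  omega

section OrderedSpectrum

variable {E : Type*} [NormedAddCommGroup E] [InnerProductSpace ℝ E]

namespace OrthonormalBasis

variable {ι : Type*} [Fintype ι] (c : OrthonormalBasis ι ℝ E)

theorem finrank_span_image (s : Finset ι) : finrank ℝ (span ℝ (c '' s)) = #s := by
  rw [Set.image_eq_range, finrank_span_eq_card]
  · simp
  exact (c.orthonormal.comp _ Subtype.val_injective).linearIndependent

theorem inner_eq_zero_of_mem_span_image {s : Set ι} {x : E} (hx : x ∈ span ℝ (c '' s)) {j : ι}
    (hj : j ∉ s) : ⟪c j, x⟫ = 0 := by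
  have hspan : span ℝ (c '' s) ≤ (ℝ ∙ c j)ᗮ := by
    rw [span_le]
    rintro _ ⟨k, hk, rfl⟩
    exact mem_orthogonal_singleton_iff_inner_right.2
      (c.orthonormal.2 (ne_of_mem_of_not_mem hk hj).symm)
  exact mem_orthogonal_singleton_iff_inner_right.1 (hspan hx)

variable {T : E →ₗ[ℝ] E} {d : ι → ℝ}

theorem inner_map_self_eq_sum (hT : ∀ j, T (c j) = d j • c j) (x : E) :
    ⟪x, T x⟫ = ∑ j, d j * ⟪c j, x⟫ ^ 2 := by
  have hTx : T x = ∑ j, (⟪c j, x⟫ * d j) • c j := by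
    conv_lhs => rw [← c.sum_repr' x]
    simp only [map_sum, map_smul, hT, smul_smul]
  rw [hTx, inner_sum]
  refine sum_congr rfl fun j _ => ?_
  rw [real_inner_smul_right, real_inner_comm]
  ring

theorem inner_map_self_le_of_mem_span (hT : ∀ j, T (c j) = d j • c j) {s : Set ι} {t : ℝ}
    (hs : ∀ j ∈ s, d j ≤ t) {x : E} (hx : x ∈ span ℝ (c '' s)) : ⟪x, T x⟫ ≤ t * ‖x‖ ^ 2 := by
  rw [c.inner_map_self_eq_sum hT, ← c.sum_sq_inner_right x, mul_sum]
  refine sum_le_sum fun j _ => ?_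
  by_cases hj : j ∈ s
  · exact mul_le_mul_of_nonneg_right (hs j hj) (sq_nonneg _)
  · simp [c.inner_eq_zero_of_mem_span_image hx hj]

theorem le_inner_map_self_of_mem_span (hT : ∀ j, T (c j) = d j • c j) {s : Set ι} {t : ℝ}
    (hs : ∀ j ∈ s, t ≤ d j) {x : E} (hx : x ∈ span ℝ (c '' s)) : t * ‖x‖ ^ 2 ≤ ⟪x, T x⟫ := by
  rw [c.inner_map_self_eq_sum hT, ← c.sum_sq_inner_right x, mul_sum]
  refine sum_le_sum fun j _ => ?_
  by_cases hj : j ∈ s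
  · exact mul_le_mul_of_nonneg_right (hs j hj) (sq_nonneg _)
  · simp [c.inner_eq_zero_of_mem_span_image hx hj]

end OrthonormalBasis

def IsOrderedSpectrum {n : ℕ} (T : E →ₗ[ℝ] E) (d : Fin n → ℝ) : Prop :=
  Antitone d ∧ ∃ c : OrthonormalBasis (Fin n) ℝ E, ∀ j, T (c j) = d j • c j

namespace IsOrderedSpectrum

variable {n : ℕ} {T T' : E →ₗ[ℝ] E} {d d' : Fin n → ℝ}

theorem exists_norm_eq_one_le_inner_and_inner_le (hT : IsOrderedSpectrum T d)
    (hT' : IsOrderedSpectrum T' d') (i : Fin n) :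
    ∃ x : E, ‖x‖ = 1 ∧ d' i ≤ ⟪x, T' x⟫ ∧ ⟪x, T x⟫ ≤ d i := by
  obtain ⟨hd, c, hc⟩ := hT
  obtain ⟨hd', c', hc'⟩ := hT'
  have : FiniteDimensional ℝ E := c.toBasis.finiteDimensional_of_finite
  set U := span ℝ (c '' ↑(Ici i))
  set V := span ℝ (c' '' ↑(Iic i))
  have hUV : U ⊓ V ≠ ⊥ := by
    apply inf_ne_bot_of_finrank_lt_add
    rw [c.finrank_span_image, c'.finrank_span_image, Fin.card_Ici, Fin.card_Iic,
      finrank_eq_card_basis c.toBasis, Fintype.card_fin]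
    omega
  obtain ⟨y, hy, hy0⟩ := exists_mem_ne_zero_of_ne_bot hUV
  have hunit : ‖‖y‖⁻¹ • y‖ = 1 := norm_smul_inv_norm hy0
  refine ⟨‖y‖⁻¹ • y, hunit, ?_, ?_⟩
  · simpa [hunit] using c'.le_inner_map_self_of_mem_span hc' (fun j hj => hd' (mem_Iic.1 hj))
      (V.smul_mem ‖y‖⁻¹ (mem_inf.1 hy).2)
  · simpa [hunit] using c.inner_map_self_le_of_mem_span hc (fun j hj => hd (mem_Ici.1 hj))
      (U.smul_mem ‖y‖⁻¹ (mem_inf.1 hy).1)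

theorem le_of_forall_inner_map_self_le {f : ℝ → ℝ} (hf : Monotone f)
    (hT : IsOrderedSpectrum T d) (hT' : IsOrderedSpectrum T' d')
    (h : ∀ x : E, ‖x‖ = 1 → ⟪x, T' x⟫ ≤ f ⟪x, T x⟫) (i : Fin n) : d' i ≤ f (d i) := by
  obtain ⟨x, hx, hle', hle⟩ := hT.exists_norm_eq_one_le_inner_and_inner_le hT' i
  exact hle'.trans ((h x hx).trans (hf hle))

end IsOrderedSpectrum

end OrderedSpectrum

theorem Matrix.mul_eq_self_of_range_le {R m n : Type*} [CommRing R] [Fintype m] [Fintype n]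
    [DecidableEq n] {P : Matrix m m R} {A : Matrix m n R} (hP : P * P = P)
    (h : LinearMap.range A.mulVecLin ≤ LinearMap.range P.mulVecLin) : P * A = A := by
  refine ext_of_mulVec_single fun j => ?_
  obtain ⟨y, hy⟩ := h ⟨Pi.single j 1, rfl⟩
  change P *ᵥ y = A *ᵥ Pi.single j 1 at hy
  rw [← mulVec_mulVec, ← hy, mulVec_mulVec, hP]

theorem Matrix.transpose_add_mul_add_eq {R m n : Type*} [CommRing R] [Fintype m]
    {P : Matrix m m R} {A E : Matrix m n R} (hPsym : Pᵀ = P) (hPA : P * A = A) :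
    (A + E)ᵀ * (A + E) = (A + P * E)ᵀ * (A + P * E) + (Eᵀ * E - (P * E)ᵀ * (P * E)) := by
  have hAPE : Aᵀ * (P * E) = Aᵀ * E := by
    rw [← Matrix.mul_assoc, ← hPsym, ← transpose_mul, hPA]
  have hEPA : (P * E)ᵀ * A = Eᵀ * A := by
    rw [transpose_mul, hPsym, Matrix.mul_assoc, hPA]
  simp only [transpose_add, Matrix.add_mul, Matrix.mul_add, hAPE, hEPA]
  abel

theorem sortedDesc_antitone {n : ℕ} (f : Fin n → ℝ) : Antitone (sortedDesc f) :=
  fun _ _ hjk => Tuple.monotone_sort f (Fin.rev_le_rev.mpr hjk)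

theorem sortedDesc_singvals_nonneg {p q : ℕ} (A : Matrix (Fin p) (Fin q) ℝ) (j : Fin q) :
    0 ≤ sortedDesc (singvals A) j :=
  Real.sqrt_nonneg _

theorem opNorm_nonneg {m n : ℕ} (B : Matrix (Fin m) (Fin n) ℝ) : 0 ≤ opNorm B :=
  norm_nonneg _

theorem opNorm_neg {m n : ℕ} (B : Matrix (Fin m) (Fin n) ℝ) : opNorm (-B) = opNorm B := by
  simp [opNorm]

section EuclideanQuadraticForms

variable {m n : ℕ}

theorem norm_toEuclideanLin_apply_le (B : Matrix (Fin m) (Fin n) ℝ)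
    (x : EuclideanSpace ℝ (Fin n)) : ‖toEuclideanLin B x‖ ≤ opNorm B * ‖x‖ :=
  (LinearMap.toContinuousLinearMap (toEuclideanLin B)).le_opNorm x

theorem abs_inner_toEuclideanLin_le (D : Matrix (Fin n) (Fin n) ℝ)
    {x : EuclideanSpace ℝ (Fin n)} (hx : ‖x‖ = 1) : |⟪x, toEuclideanLin D x⟫| ≤ opNorm D := by
  simpa [hx] using (abs_real_inner_le_norm x _).trans
    (mul_le_mul_of_nonneg_left (norm_toEuclideanLin_apply_le D x) (norm_nonneg x))

theorem inner_toEuclideanLin_transpose_mul_self (X : Matrix (Fin m) (Fin n) ℝ)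
    (x : EuclideanSpace ℝ (Fin n)) :
    ⟪x, toEuclideanLin (Xᵀ * X) x⟫ = ‖toEuclideanLin X x‖ ^ 2 := by
  rw [← conjTranspose_eq_transpose_of_trivial, toLpLin_mul_same, LinearMap.comp_apply,
    toEuclideanLin_conjTranspose_eq_adjoint, LinearMap.adjoint_inner_right,
    real_inner_self_eq_norm_sq]

theorem inner_toEuclideanLin_add_sub_transpose_mul_self (X B : Matrix (Fin m) (Fin n) ℝ)
    (D : Matrix (Fin n) (Fin n) ℝ) (x : EuclideanSpace ℝ (Fin n)) :
    ⟪x, toEuclideanLin (Xᵀ * X + (D - Bᵀ * B)) x⟫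
      = ‖toEuclideanLin X x‖ ^ 2 + ⟪x, toEuclideanLin D x⟫ - ‖toEuclideanLin B x‖ ^ 2 := by
  rw [map_add, map_sub, LinearMap.add_apply, LinearMap.sub_apply, inner_add_right,
    inner_sub_right, inner_toEuclideanLin_transpose_mul_self,
    inner_toEuclideanLin_transpose_mul_self]
  ring

end EuclideanQuadraticForms

theorem Matrix.IsHermitian.exists_orthonormalBasis_apply_eq_eigenvalues_sort {n : ℕ}
    {H : Matrix (Fin n) (Fin n) ℝ} (hH : H.IsHermitian) (f : Fin n → ℝ) :
    ∃ c : OrthonormalBasis (Fin n) ℝ (EuclideanSpace ℝ (Fin n)),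
      ∀ j, toEuclideanLin H (c j) = hH.eigenvalues (Tuple.sort f j.rev) • c j := by
  refine ⟨hH.eigenvectorBasis.reindex (Fin.revPerm.trans (Tuple.sort f)).symm, fun j => ?_⟩
  rw [OrthonormalBasis.reindex_apply, Equiv.symm_symm, toLpLin_apply]
  exact congrArg _ (hH.mulVec_eigenvectorBasis _)

theorem Matrix.IsHermitian.isOrderedSpectrum_sortedDesc_eigenvalues {n : ℕ}
    {H : Matrix (Fin n) (Fin n) ℝ} (hH : H.IsHermitian) :
    IsOrderedSpectrum (toEuclideanLin H) (sortedDesc hH.eigenvalues) :=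
  ⟨sortedDesc_antitone _, hH.exists_orthonormalBasis_apply_eq_eigenvalues_sort _⟩

theorem isOrderedSpectrum_transpose_mul_self {p q : ℕ} (A : Matrix (Fin p) (Fin q) ℝ) :
    IsOrderedSpectrum (toEuclideanLin (Aᵀ * A)) (fun j => sortedDesc (singvals A) j ^ 2) := by
  refine ⟨fun j k hjk => pow_le_pow_left₀ (sortedDesc_singvals_nonneg A k)
    (sortedDesc_antitone _ hjk) 2, ?_⟩
  have hA := isHermitian_conjTranspose_mul_self A
  obtain ⟨c, hc⟩ := hA.exists_orthonormalBasis_apply_eq_eigenvalues_sort (singvals A)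
  refine ⟨c, fun j => ?_⟩
  dsimp only [sortedDesc, singvals]
  rw [Real.sq_sqrt ((posSemidef_conjTranspose_mul_self A).eigenvalues_nonneg _)]
  exact hc j

section Weyl

variable {p q : ℕ}

theorem sortedDesc_singvals_add_le (A B : Matrix (Fin p) (Fin q) ℝ) (i : Fin q) :
    sortedDesc (singvals (A + B)) i ≤ sortedDesc (singvals A) i + opNorm B := by
  have hf : Monotone fun t => (√t + opNorm B) ^ 2 := fun a b hab =>
    pow_le_pow_left₀ (add_nonneg (Real.sqrt_nonneg a) (opNorm_nonneg B))
      (add_le_add_left (Real.sqrt_le_sqrt hab) _) 2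
  have key := (isOrderedSpectrum_transpose_mul_self A).le_of_forall_inner_map_self_le hf
    (isOrderedSpectrum_transpose_mul_self (A + B)) (fun x hx => ?_) i
  · rw [Real.sqrt_sq (sortedDesc_singvals_nonneg A i)] at key
    exact (pow_le_pow_iff_left₀ (sortedDesc_singvals_nonneg _ i)
      (add_nonneg (sortedDesc_singvals_nonneg A i) (opNorm_nonneg B)) two_ne_zero).1 key
  rw [inner_toEuclideanLin_transpose_mul_self, inner_toEuclideanLin_transpose_mul_self,
    Real.sqrt_sq (norm_nonneg _), map_add, LinearMap.add_apply]
  have hB := norm_toEuclideanLin_apply_le B x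
  rw [hx, mul_one] at hB
  have := norm_add_le (toEuclideanLin A x) (toEuclideanLin B x)
  gcongr
  linarith

variable {W D : Matrix (Fin q) (Fin q) ℝ} {X B : Matrix (Fin p) (Fin q) ℝ}

theorem sortedDesc_eigenvalues_le_sq_sortedDesc_singvals_add (hW : W.IsHermitian)
    (hWeq : W = Xᵀ * X + (D - Bᵀ * B)) (i : Fin q) :
    sortedDesc hW.eigenvalues i ≤ sortedDesc (singvals X) i ^ 2 + opNorm D := by
  refine (isOrderedSpectrum_transpose_mul_self X).le_of_forall_inner_map_self_le
    (monotone_id.add_const _) hW.isOrderedSpectrum_sortedDesc_eigenvalues (fun x hx => ?_) i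
  rw [hWeq, inner_toEuclideanLin_add_sub_transpose_mul_self,
    inner_toEuclideanLin_transpose_mul_self]
  have hD := (abs_le.1 (abs_inner_toEuclideanLin_le D hx)).2
  have := sq_nonneg ‖toEuclideanLin B x‖
  simp only [id]
  linarith

theorem sq_sortedDesc_singvals_le_sortedDesc_eigenvalues_add (hW : W.IsHermitian)
    (hWeq : W = Xᵀ * X + (D - Bᵀ * B)) (i : Fin q) :
    sortedDesc (singvals X) i ^ 2 ≤ sortedDesc hW.eigenvalues i + (opNorm D + opNorm B ^ 2) := by
  refine hW.isOrderedSpectrum_sortedDesc_eigenvalues.le_of_forall_inner_map_self_le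
    (monotone_id.add_const _) (isOrderedSpectrum_transpose_mul_self X) (fun x hx => ?_) i
  rw [hWeq, inner_toEuclideanLin_add_sub_transpose_mul_self,
    inner_toEuclideanLin_transpose_mul_self]
  have hD := (abs_le.1 (abs_inner_toEuclideanLin_le D hx)).1
  have hB := norm_toEuclideanLin_apply_le B x
  rw [hx, mul_one] at hB
  have := pow_le_pow_left₀ (norm_nonneg _) hB 2
  simp only [id]
  linarith

end Weyl

/-- With `δ = σ + ν - s ≥ 0`, the lower bound rests on `σ² - s² + 2sν = (ν - δ)² + 2sδ`. -/
theorem abs_sub_sq_le_of_perturbation {l s σ ν ρ : ℝ} (hs : 0 ≤ s) (hσ : 0 ≤ σ)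
    (hσs : σ ≤ s + ν) (hsσ : s ≤ σ + ν) (hl : l ≤ σ ^ 2 + ρ) (hσl : σ ^ 2 ≤ l + (ρ + ν ^ 2)) :
    |l - s ^ 2| ≤ 2 * s * ν + ν ^ 2 + ρ := by
  rw [abs_le]
  constructor
  · nlinarith [sq_nonneg (ν - (σ + ν - s)), mul_nonneg hs (sub_nonneg.2 hsσ)]
  · nlinarith [pow_le_pow_left₀ hσ hσs 2]

theorem eigenvalue_perturbation_bound_general (p q : ℕ)
    (A E : Matrix (Fin p) (Fin q) ℝ) (P : Matrix (Fin p) (Fin p) ℝ)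
    (hPidem : P * P = P) (hPsym : Pᵀ = P)
    (hPrange : LinearMap.range P.mulVecLin = LinearMap.range A.mulVecLin)
    (hW : ((A + E)ᵀ * (A + E) - (p : ℝ) • (1 : Matrix (Fin q) (Fin q) ℝ)).IsHermitian)
    (i : Fin q) :
    |sortedDesc hW.eigenvalues i - (sortedDesc (singvals A) i) ^ 2|
      ≤ 2 * sortedDesc (singvals A) i * opNorm (P * E) + opNorm (P * E) ^ 2
        + opNorm (Eᵀ * E - (p : ℝ) • (1 : Matrix (Fin q) (Fin q) ℝ)) := by
  have hWeq : (A + E)ᵀ * (A + E) - (p : ℝ) • 1 = (A + P * E)ᵀ * (A + P * E)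
      + ((Eᵀ * E - (p : ℝ) • 1) - (P * E)ᵀ * (P * E)) := by
    rw [transpose_add_mul_add_eq hPsym (mul_eq_self_of_range_le hPidem hPrange.ge)]
    abel
  have hσ_le := sortedDesc_singvals_add_le A (P * E) i
  have hs_le := sortedDesc_singvals_add_le (A + P * E) (-(P * E)) i
  rw [add_neg_cancel_right, opNorm_neg] at hs_le
  exact abs_sub_sq_le_of_perturbation (sortedDesc_singvals_nonneg A i)
    (sortedDesc_singvals_nonneg (A + P * E) i) hσ_le hs_le
    (sortedDesc_eigenvalues_le_sq_sortedDesc_singvals_add hW hWeq i)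
    (sq_sortedDesc_singvals_le_sortedDesc_eigenvalues_add hW hWeq i)

/-- Deterministic perturbation bound: for `W = YᵀY − p I_q` with `Y = A + E`, and `Π` an
orthogonal projection onto the column space of `A`, the `i`-th largest eigenvalue of `W`
is close to `σ_i(A)²`:
`|λ_i(W) − σ_i(A)²| ≤ 2 σ_i(A) ‖ΠE‖_∞ + ‖ΠE‖_∞² + ‖EᵀE − p I_q‖_∞`. -/
theorem eigenvalue_perturbation_bound (p q : ℕ) (hpq : q ≤ p)
    (A E : Matrix (Fin p) (Fin q) ℝ) (P : Matrix (Fin p) (Fin p) ℝ)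
    (hPidem : P * P = P) (hPsym : Pᵀ = P)
    (hPrange : LinearMap.range P.mulVecLin = LinearMap.range A.mulVecLin)
    (hW : ((A + E)ᵀ * (A + E) - (p : ℝ) • (1 : Matrix (Fin q) (Fin q) ℝ)).IsHermitian)
    (i : Fin q) :
    |sortedDesc hW.eigenvalues i - (sortedDesc (singvals A) i) ^ 2|
      ≤ 2 * sortedDesc (singvals A) i * opNorm (P * E) + opNorm (P * E) ^ 2
        + opNorm (Eᵀ * E - (p : ℝ) • (1 : Matrix (Fin q) (Fin q) ℝ)) :=
  eigenvalue_perturbation_bound_general p q A E P hPidem hPsym hPrange hW i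
end

section
/- Let I ⊂ ℝ be a compact interval, f continuous on I, and g₁, …, g_q continuous functions on I with g₁ ≡ 1. Then there exist probability measures ν₀, ν₁ on I such that ∫ g_l dν₀ = ∫ g_l dν₁ for all l = 1, …, q and ∫ f dν₁ − ∫ f dν₀ = 2 E_G[f; I], where G = span(g₁, …, g_q) and E_G[f; I] = inf_{g ∈ G} sup_{x∈I} |f(x) − g(x)|. Moreover no pair of probability measures with matching g_l-moments can achieve a strictly larger difference ∫ f dν₁ − ∫ f dν₀ > 2 E_G[f; I]. -/
open MeasureTheory

open Set Finset Pointwise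


lemma pad_sum {m n : ℕ} (hmn : m ≤ n) {α : Type*} [AddCommMonoid α] (Φ : Fin m → α) :
    ∑ i : Fin n, (if h : (i : ℕ) < m then Φ ⟨i, h⟩ else 0) = ∑ j : Fin m, Φ j := by
  rw [Fin.sum_univ_eq_sum_range (fun i => if h : i < m then Φ ⟨i, h⟩ else 0) n]
  rw [show (∑ j : Fin m, Φ j) = ∑ i ∈ Finset.range m, (if h : i < m then Φ ⟨i, h⟩ else 0) by
    rw [← Fin.sum_univ_eq_sum_range (fun i => if h : i < m then Φ ⟨i, h⟩ else 0) m]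
    exact Finset.sum_congr rfl fun j _ => by simp]
  exact (Finset.sum_subset (Finset.range_subset_range.2 hmn)
    (fun i _ hi => dif_neg (by simpa using hi))).symm

lemma aux_isCompact_convexHull {V : Type*} [NormedAddCommGroup V] [NormedSpace ℝ V]
    [FiniteDimensional ℝ V] {s : Set V} (hs : IsCompact s) :
    IsCompact (convexHull ℝ s) := by
  rcases s.eq_empty_or_nonempty with rfl | ⟨s₀, hs₀⟩
  · simpa using isCompact_empty
  set n := Module.finrank ℝ V + 1 with hn
  set T : (Fin n → ℝ) × (Fin n → V) → V := fun p => ∑ i, p.1 i • p.2 i with hT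
  have hTcont : Continuous T := by
    apply continuous_finset_sum
    intro i _
    exact ((continuous_apply i).comp continuous_fst).smul
      ((continuous_apply i).comp continuous_snd)
  have hA : IsCompact ((stdSimplex ℝ (Fin n)) ×ˢ (Set.univ.pi fun _ : Fin n => s)) :=
    IsCompact.prod (isCompact_stdSimplex ℝ (Fin n)) (isCompact_univ_pi fun _ => hs)
  have heq : convexHull ℝ s = T '' ((stdSimplex ℝ (Fin n)) ×ˢ (Set.univ.pi fun _ : Fin n => s)) := by
    apply Set.Subset.antisymm
    · intro x hx
      obtain ⟨ι, hfin, z, w, hzs, haff, hw0, hw1, hsum⟩ :=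
        eq_pos_convex_span_of_mem_convexHull hx
      have hcard : Fintype.card ι ≤ n := by
        refine (haff.card_le_finrank_succ).trans ?_
        have := Submodule.finrank_le (vectorSpan ℝ (Set.range z))
        omega
      set m := Fintype.card ι with hm
      set e := Fintype.equivFin ι with he
      set w' : Fin n → ℝ := fun i => if h : (i : ℕ) < m then w (e.symm ⟨i, h⟩) else 0 with hw'
      set z' : Fin n → V := fun i => if h : (i : ℕ) < m then z (e.symm ⟨i, h⟩) else s₀ with hz'
      refine ⟨(w', z'), ⟨⟨?_, ?_⟩, ?_⟩, ?_⟩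
      · intro i
        by_cases h : (i : ℕ) < m
        · simp only [hw', dif_pos h]; exact (hw0 _).le
        · simp [hw', dif_neg h]
      · have : ∑ i : Fin n, w' i = ∑ j : Fin m, w (e.symm j) := by
          simpa [hw'] using pad_sum hcard (fun j : Fin m => w (e.symm j))
        rw [this, Equiv.sum_comp e.symm w]; exact hw1
      · intro i _
        by_cases h : (i : ℕ) < m
        · simp only [hz', dif_pos h]; exact hzs (Set.mem_range_self _)
        · simp only [hz', dif_neg h]; exact hs₀
      · have : ∑ i : Fin n, w' i • z' i = ∑ j : Fin m, w (e.symm j) • z (e.symm j) := by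
          have := pad_sum hcard (fun j : Fin m => w (e.symm j) • z (e.symm j))
          rw [← this]
          apply Finset.sum_congr rfl
          intro i _
          by_cases h : (i : ℕ) < m
          · simp [hw', hz', dif_pos h]
          · simp [hw', hz', dif_neg h]
        rw [hT]
        simp only
        rw [this, Equiv.sum_comp e.symm (fun i => w i • z i)]
        exact hsum
    · rintro x ⟨⟨w, z⟩, ⟨⟨hw0, hw1⟩, hz⟩, rfl⟩
      have := Finset.univ.centerMass_mem_convexHull (w := w) (z := z)
        (fun i _ => hw0 i) (by rw [hw1]; norm_num) (fun i _ => hz i (Set.mem_univ i))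
      rwa [Finset.centerMass_eq_of_sum_1 _ _ hw1] at this
  rw [heq]
  exact hA.image hTcont


lemma exists_measure_of_mem_convexHull {q : ℕ} (a b : ℝ) (f : ℝ → ℝ) (g : Fin q → ℝ → ℝ)
    {p : (Fin q → ℝ) × ℝ}
    (hp : p ∈ convexHull ℝ ((fun x => (fun l => g l x, f x)) '' Set.Icc a b)) :
    ∃ ν : Measure ℝ, IsProbabilityMeasure ν ∧ ν (Set.Icc a b)ᶜ = 0 ∧
      (∀ l, ∫ x, g l x ∂ν = p.1 l) ∧ (∫ x, f x ∂ν = p.2) := by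
  set G : ℝ → (Fin q → ℝ) × ℝ := fun x => (fun l => g l x, f x) with hG
  rw [_root_.convexHull_eq] at hp
  obtain ⟨ι, t, w, z, hw0, hw1, hz, hcm⟩ := hp
  classical
  set x : ι → ℝ := fun i => if h : i ∈ t then (hz i h).choose else a with hx
  have hxmem : ∀ i ∈ t, x i ∈ Set.Icc a b := by
    intro i hi
    simp only [hx, dif_pos hi]
    exact (hz i hi).choose_spec.1
  have hxG : ∀ i ∈ t, G (x i) = z i := by
    intro i hi
    simp only [hx, dif_pos hi]
    exact (hz i hi).choose_spec.2
  set ν : Measure ℝ := ∑ i ∈ t, (ENNReal.ofReal (w i)) • Measure.dirac (x i) with hν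
  have hint : ∀ h : ℝ → ℝ, ∫ y, h y ∂ν = ∑ i ∈ t, w i * h (x i) := by
    intro h
    have hI : ∀ i ∈ t, Integrable h ((ENNReal.ofReal (w i)) • Measure.dirac (x i)) := by
      intro i _
      exact ((integrable_const (h (x i))).congr (ae_eq_dirac h).symm).smul_measure
        ENNReal.ofReal_ne_top
    rw [hν, integral_finset_sum_measure hI]
    refine Finset.sum_congr rfl fun i hi => ?_
    rw [integral_smul_measure, integral_dirac, ENNReal.toReal_ofReal (hw0 i hi), smul_eq_mul]
  have hpsum : p = ∑ i ∈ t, w i • z i := by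
    rw [← hcm, Finset.centerMass_eq_of_sum_1 _ _ hw1]
  refine ⟨ν, ?_, ?_, ?_, ?_⟩
  · constructor
    rw [hν, Measure.finset_sum_apply]
    have : ∀ i ∈ t, ((ENNReal.ofReal (w i)) • Measure.dirac (x i)) Set.univ
        = ENNReal.ofReal (w i) := by
      intro i _
      simp [Measure.smul_apply]
    rw [Finset.sum_congr rfl this, ← ENNReal.ofReal_sum_of_nonneg hw0, hw1, ENNReal.ofReal_one]
  · rw [hν, Measure.finset_sum_apply]
    refine Finset.sum_eq_zero fun i hi => ?_
    rw [Measure.smul_apply, Measure.dirac_apply' _ measurableSet_Icc.compl]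
    simp [Set.indicator_of_notMem, hxmem i hi]
  · intro l
    rw [hint (g l)]
    have : p.1 l = ∑ i ∈ t, w i * (z i).1 l := by
      rw [hpsum]
      simp [Prod.fst_sum, Finset.sum_apply]
    rw [this]
    refine Finset.sum_congr rfl fun i hi => ?_
    rw [← hxG i hi]
  · rw [hint f]
    have : p.2 = ∑ i ∈ t, w i * (z i).2 := by
      rw [hpsum]
      simp [Prod.snd_sum]
    rw [this]
    refine Finset.sum_congr rfl fun i hi => ?_
    rw [← hxG i hi]

/-- Best uniform approximation error of `f` on `[a,b]` by the linear span of the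
functions `g l`. -/
noncomputable def bestApproxSpan (a b : ℝ) (f : ℝ → ℝ) {q : ℕ} (g : Fin q → ℝ → ℝ) : ℝ :=
  ⨅ c : Fin q → ℝ, ⨆ x : Set.Icc a b, |f x.1 - ∑ l, c l * g l x.1|

/-- Duality between moment matching and best uniform approximation: there exist two
probability measures on `I = [a,b]` with matching `g`-moments whose `f`-means differ by
exactly `2 E_G[f;I]`, and no such pair achieves a strictly larger difference. -/
theorem moment_matching_duality (a b : ℝ) (hab : a ≤ b) (f : ℝ → ℝ)
    (hf : ContinuousOn f (Set.Icc a b)) (q : ℕ) (hq : 0 < q)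
    (g : Fin q → ℝ → ℝ) (hg : ∀ l, ContinuousOn (g l) (Set.Icc a b))
    (hg1 : g ⟨0, hq⟩ = fun _ => 1) :
    ∃ ν₀ ν₁ : Measure ℝ, IsProbabilityMeasure ν₀ ∧ IsProbabilityMeasure ν₁ ∧
      ν₀ (Set.Icc a b)ᶜ = 0 ∧ ν₁ (Set.Icc a b)ᶜ = 0 ∧
      (∀ l, ∫ x, g l x ∂ν₀ = ∫ x, g l x ∂ν₁) ∧
      ((∫ x, f x ∂ν₁) - ∫ x, f x ∂ν₀ = 2 * bestApproxSpan a b f g) ∧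
      (∀ μ₀ μ₁ : Measure ℝ, IsProbabilityMeasure μ₀ → IsProbabilityMeasure μ₁ →
        μ₀ (Set.Icc a b)ᶜ = 0 → μ₁ (Set.Icc a b)ᶜ = 0 →
        (∀ l, ∫ x, g l x ∂μ₀ = ∫ x, g l x ∂μ₁) →
        (∫ x, f x ∂μ₁) - ∫ x, f x ∂μ₀ ≤ 2 * bestApproxSpan a b f g) := by
  
  classical
  have hne : (Set.Icc a b).Nonempty := Set.nonempty_Icc.2 hab
  have hIa : a ∈ Set.Icc a b := Set.left_mem_Icc.2 hab
  haveI : Nonempty (Set.Icc a b) := hne.to_subtype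
  have hcomp : IsCompact (Set.Icc a b) := isCompact_Icc
  set E := bestApproxSpan a b f g with hE
  set S : (Fin q → ℝ) → ℝ := fun c => ⨆ x : Set.Icc a b, |f x.1 - ∑ l, c l * g l x.1| with hSdef
  -- continuity of error functions
  have herr : ∀ c : Fin q → ℝ,
      ContinuousOn (fun x => |f x - ∑ l, c l * g l x|) (Set.Icc a b) := by
    intro c
    exact (hf.sub (continuousOn_finset_sum _ fun l _ => (hg l).const_smul (c l))).abs
  have hbdd : ∀ c : Fin q → ℝ,
      BddAbove (Set.range fun x : Set.Icc a b => |f x.1 - ∑ l, c l * g l x.1|) := by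
    intro c
    have h1 : BddAbove ((fun x => |f x - ∑ l, c l * g l x|) '' Set.Icc a b) :=
      (hcomp.image_of_continuousOn (herr c)).bddAbove
    obtain ⟨C, hC⟩ := h1
    refine ⟨C, ?_⟩
    rintro y ⟨x, rfl⟩
    exact hC (Set.mem_image_of_mem _ x.2)
  have hle_S : ∀ (c : Fin q → ℝ) (x : ℝ) (hx : x ∈ Set.Icc a b),
      |f x - ∑ l, c l * g l x| ≤ S c := by
    intro c x hx
    exact le_ciSup (hbdd c) (⟨x, hx⟩ : Set.Icc a b)
  have hS0 : ∀ c, 0 ≤ S c := fun c => (abs_nonneg _).trans (hle_S c a hIa)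
  have hEbdd : BddBelow (Set.range S) := ⟨0, by rintro _ ⟨c, rfl⟩; exact hS0 c⟩
  have hE_le : ∀ c, E ≤ S c := fun c => ciInf_le hEbdd c
  have hE0 : 0 ≤ E := le_ciInf hS0
  -- integrability of continuous functions w.r.t. measures supported on Icc
  have hmemae : ∀ (μ : Measure ℝ), μ (Set.Icc a b)ᶜ = 0 → ∀ᵐ x ∂μ, x ∈ Set.Icc a b := by
    intro μ hμ
    rw [ae_iff]
    have h2 : {x | ¬ x ∈ Set.Icc a b} = (Set.Icc a b)ᶜ := rfl
    rw [h2]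
    exact hμ
  have integ : ∀ (μ : Measure ℝ), IsProbabilityMeasure μ → μ (Set.Icc a b)ᶜ = 0 →
      ∀ (h : ℝ → ℝ), ContinuousOn h (Set.Icc a b) → Integrable h μ := by
    intro μ hμ hμc h hcont
    haveI := hμ
    have hrest : μ.restrict (Set.Icc a b) = μ :=
      Measure.restrict_eq_self_of_ae_mem (hmemae μ hμc)
    have hmeas : AEStronglyMeasurable h μ := by
      rw [← hrest]
      exact hcont.aestronglyMeasurable measurableSet_Icc
    obtain ⟨C, hC⟩ := hcomp.exists_bound_of_continuousOn hcont
    exact Integrable.mono' (integrable_const C) hmeas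
      ((hmemae μ hμc).mono fun x hx => hC x hx)
  -- the upper bound (second) part
  have key : ∀ μ₀ μ₁ : Measure ℝ, IsProbabilityMeasure μ₀ → IsProbabilityMeasure μ₁ →
      μ₀ (Set.Icc a b)ᶜ = 0 → μ₁ (Set.Icc a b)ᶜ = 0 →
      (∀ l, ∫ x, g l x ∂μ₀ = ∫ x, g l x ∂μ₁) →
      (∫ x, f x ∂μ₁) - ∫ x, f x ∂μ₀ ≤ 2 * E := by
    intro μ₀ μ₁ h0 h1 hc0 hc1 hmom
    haveI := h0; haveI := h1
    have hkey2 : ∀ c : Fin q → ℝ, (∫ x, f x ∂μ₁) - ∫ x, f x ∂μ₀ ≤ 2 * S c := by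
      intro c
      set gc : ℝ → ℝ := fun x => ∑ l, c l * g l x with hgc
      have hgccont : ContinuousOn gc (Set.Icc a b) :=
        continuousOn_finset_sum _ fun l _ => (hg l).const_smul (c l)
      have hint_f0 : Integrable f μ₀ := integ μ₀ h0 hc0 f hf
      have hint_f1 : Integrable f μ₁ := integ μ₁ h1 hc1 f hf
      have hint_g0 : Integrable gc μ₀ := integ μ₀ h0 hc0 gc hgccont
      have hint_g1 : Integrable gc μ₁ := integ μ₁ h1 hc1 gc hgccont
      have hA : ∫ x, (f x - gc x) ∂μ₁ ≤ S c := by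
        have hmono := integral_mono_ae (hint_f1.sub hint_g1) (integrable_const (S c))
          ((hmemae μ₁ hc1).mono fun x hx => (le_abs_self _).trans (hle_S c x hx))
        simpa using hmono
      have hB : ∫ x, (gc x - f x) ∂μ₀ ≤ S c := by
        have hmono := integral_mono_ae (hint_g0.sub hint_f0) (integrable_const (S c))
          ((hmemae μ₀ hc0).mono fun x hx => by
            have := (neg_abs_le (f x - gc x)).trans (le_abs_self _)
            have h2 : gc x - f x ≤ |f x - gc x| := by
              rw [abs_sub_comm]; exact le_abs_self _
            exact h2.trans (hle_S c x hx))
        simpa using hmono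
      have hgeq : ∫ x, gc x ∂μ₀ = ∫ x, gc x ∂μ₁ := by
        have e0 : ∫ x, gc x ∂μ₀ = ∑ l, c l * ∫ x, g l x ∂μ₀ := by
          rw [hgc]
          rw [integral_finset_sum _ fun l _ => (integ μ₀ h0 hc0 (g l) (hg l)).const_mul (c l)]
          exact Finset.sum_congr rfl fun l _ => integral_const_mul _ _
        have e1 : ∫ x, gc x ∂μ₁ = ∑ l, c l * ∫ x, g l x ∂μ₁ := by
          rw [hgc]
          rw [integral_finset_sum _ fun l _ => (integ μ₁ h1 hc1 (g l) (hg l)).const_mul (c l)]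
          exact Finset.sum_congr rfl fun l _ => integral_const_mul _ _
        rw [e0, e1]
        exact Finset.sum_congr rfl fun l _ => by rw [hmom l]
      rw [integral_sub hint_f1 hint_g1] at hA
      rw [integral_sub hint_g0 hint_f0] at hB
      linarith
    have : ((∫ x, f x ∂μ₁) - ∫ x, f x ∂μ₀) / 2 ≤ E := by
      apply le_ciInf
      intro c
      linarith [hkey2 c]
    linarith
  -- existence part
  set G : ℝ → (Fin q → ℝ) × ℝ := fun x => (fun l => g l x, f x) with hG
  have hGcont : ContinuousOn G (Set.Icc a b) :=
    ContinuousOn.prodMk (continuousOn_pi.mpr hg) hf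
  set Sset : Set ((Fin q → ℝ) × ℝ) := G '' Set.Icc a b with hSset
  have hScomp : IsCompact Sset := hcomp.image_of_continuousOn hGcont
  set K := convexHull ℝ Sset with hK
  have hKcomp : IsCompact K := aux_isCompact_convexHull hScomp
  have hKconv : Convex ℝ K := convex_convexHull ℝ _
  have hDconv : Convex ℝ (K - K) := hKconv.sub hKconv
  have hDcomp : IsCompact (K - K) := by
    have : K - K = (fun p : ((Fin q → ℝ) × ℝ) × ((Fin q → ℝ) × ℝ) => p.1 - p.2) '' K ×ˢ K := by
      ext y
      constructor
      · intro hy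
        rcases Set.mem_sub.1 hy with ⟨u, hu, v, hv, rfl⟩
        exact ⟨(u, v), ⟨hu, hv⟩, rfl⟩
      · rintro ⟨⟨u, v⟩, ⟨hu, hv⟩, rfl⟩
        exact Set.sub_mem_sub hu hv
    rw [this]
    exact (hKcomp.prod hKcomp).image (continuous_fst.sub continuous_snd)
  have hmemD : ((0 : Fin q → ℝ), 2 * E) ∈ K - K := by
    by_contra hnot
    obtain ⟨φ, u, hDu, hu⟩ := geometric_hahn_banach_closed_point hDconv hDcomp.isClosed hnot
    set γ : ℝ := φ ((0 : Fin q → ℝ), (1 : ℝ)) with hγ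
    set cc : Fin q → ℝ := fun l => φ ((Pi.single l 1 : Fin q → ℝ), (0 : ℝ)) with hcc
    have hφ : ∀ x : ℝ, φ (G x) = (∑ l, cc l * g l x) + γ * f x := by
      intro x
      have hdecomp : G x = (∑ l, (g l x) • ((Pi.single l 1 : Fin q → ℝ), (0 : ℝ)))
          + (f x) • ((0 : Fin q → ℝ), (1 : ℝ)) := by
        apply Prod.ext
        · simp only [Prod.fst_add, Prod.fst_sum, Prod.smul_fst, Prod.smul_snd, smul_eq_mul]
          funext l'
          simp [Finset.sum_apply, Pi.single_apply, mul_ite, Finset.sum_ite_eq', hG]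
        · simp [hG, Prod.snd_sum]
      rw [hdecomp, map_add, _root_.map_sum, _root_.map_smul]
      simp only [smul_eq_mul]
      congr 1
      · exact Finset.sum_congr rfl fun l _ => by
          rw [_root_.map_smul, smul_eq_mul]
          exact mul_comm _ _
      · exact mul_comm _ _
    set H : ℝ → ℝ := fun x => φ (G x) with hH
    have hHcont : ContinuousOn H (Set.Icc a b) := φ.continuous.comp_continuousOn hGcont
    obtain ⟨xp, hxpI, hmax⟩ := hcomp.exists_isMaxOn hne hHcont
    obtain ⟨xm, hxmI, hmin⟩ := hcomp.exists_isMinOn hne hHcont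
    set M := H xp with hM
    set m' := H xm with hm'
    have hMub : ∀ x ∈ Set.Icc a b, H x ≤ M := fun x hx => hmax hx
    have hmlb : ∀ x ∈ Set.Icc a b, m' ≤ H x := fun x hx => hmin hx
    have hd0 : G xp - G xm ∈ K - K :=
      Set.sub_mem_sub (subset_convexHull ℝ _ (Set.mem_image_of_mem G hxpI))
        (subset_convexHull ℝ _ (Set.mem_image_of_mem G hxmI))
    have hMm_lt : M - m' < u := by
      have := hDu _ hd0
      rwa [_root_.map_sub] at this
    have hu2 : u < 2 * E * γ := by
      have : φ ((0 : Fin q → ℝ), 2 * E) = 2 * E * γ := by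
        have h2 : ((0 : Fin q → ℝ), 2 * E) = (2 * E) • ((0 : Fin q → ℝ), (1 : ℝ)) := by
          simp [Prod.smul_def]
        rw [h2, _root_.map_smul, smul_eq_mul, hγ]
      rwa [this] at hu
    have hMm0 : 0 ≤ M - m' := by
      have := hmlb xp hxpI
      linarith
    have hγpos : 0 < γ := by
      rcases lt_or_ge 0 γ with h | h
      · exact h
      · exfalso
        have : 2 * E * γ ≤ 0 := mul_nonpos_of_nonneg_of_nonpos (by linarith) h
        linarith
    -- construct the contradiction coefficients
    set d : Fin q → ℝ := fun l => (if l = ⟨0, hq⟩ then (M + m') / (2 * γ) else 0) - cc l / γ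
      with hd
    have hsum_d : ∀ x ∈ Set.Icc a b,
        ∑ l, d l * g l x = (M + m') / (2 * γ) - (∑ l, cc l * g l x) / γ := by
      intro x hx
      have h1 : ∀ l : Fin q, d l * g l x
          = (if l = ⟨0, hq⟩ then (M + m') / (2 * γ) * g l x else 0) - cc l * g l x / γ := by
        intro l
        rw [hd]
        simp only
        split <;> ring
      rw [Finset.sum_congr rfl fun l _ => h1 l, Finset.sum_sub_distrib,
        Finset.sum_ite_eq' Finset.univ (⟨0, hq⟩ : Fin q) (fun l => (M + m') / (2 * γ) * g l x),
        Finset.sum_div, hg1]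
      simp
    have hbound : ∀ x ∈ Set.Icc a b, |f x - ∑ l, d l * g l x| ≤ (M - m') / (2 * γ) := by
      intro x hx
      have hγne : γ ≠ 0 := ne_of_gt hγpos
      have hfx : f x - ∑ l, d l * g l x = (H x - (M + m') / 2) / γ := by
        have hHx : H x = (∑ l, cc l * g l x) + γ * f x := hφ x
        rw [hsum_d x hx, hHx]
        field_simp
        ring
      rw [hfx, abs_div, abs_of_pos hγpos]
      rw [div_le_div_iff₀ hγpos (by positivity)]
      have h1 : |H x - (M + m') / 2| ≤ (M - m') / 2 := by
        rw [abs_le]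
        constructor
        · linarith [hmlb x hx]
        · linarith [hMub x hx]
      nlinarith [hγpos]
    have hSd : S d ≤ (M - m') / (2 * γ) := by
      apply ciSup_le
      intro x
      exact hbound x.1 x.2
    have hlt : (M - m') / (2 * γ) < E := by
      rw [div_lt_iff₀ (by positivity)]
      nlinarith
    linarith [hE_le d]
  -- extract points and measures
  obtain ⟨p₁, hp₁, p₀, hp₀, hsub⟩ := Set.mem_sub.1 hmemD
  obtain ⟨ν₁, hν₁prob, hν₁c, hν₁g, hν₁f⟩ := exists_measure_of_mem_convexHull a b f g hp₁
  obtain ⟨ν₀, hν₀prob, hν₀c, hν₀g, hν₀f⟩ := exists_measure_of_mem_convexHull a b f g hp₀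
  have hfst : p₁.1 = p₀.1 := by
    have := congrArg Prod.fst hsub
    simpa [sub_eq_zero] using this
  have hsnd : p₁.2 - p₀.2 = 2 * E := congrArg Prod.snd hsub
  refine ⟨ν₀, ν₁, hν₀prob, hν₁prob, hν₀c, hν₁c, ?_, ?_, key⟩
  · intro l
    rw [hν₀g l, hν₁g l, hfst]
  · rw [hν₁f, hν₀f, hsnd]
end

section
/- Let P(x) = ∑_{k=0}^n a_k x^k be a real polynomial of degree at most n with |P(x)| ≤ 1 for all x ∈ [−1, 1]. Then for each ν, |a_{n−2ν}| is at most the absolute value of the corresponding coefficient of the Chebyshev polynomial T_n, and |a_{n−1−2ν}| is at most the absolute value of the corresponding coefficient of T_{n−1}. In particular, every coefficient satisfies |a_k| ≤ 2^{3n}. -/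
open Polynomial

open Finset

lemma prodXsubC_sign (a : ℕ → ℝ) (t : Finset ℕ) (ha : ∀ i ∈ t, 0 ≤ a i) (s : ℕ) :
    0 ≤ (-1 : ℝ) ^ (t.card + s) * (∏ i ∈ t, (X - C (a i))).coeff s := by
  induction t using Finset.induction generalizing s with
  | empty => simp [coeff_one]; rcases s with _|s <;> simp [pow_succ]
  | @insert j t hj ih =>
    rw [Finset.prod_insert hj, Finset.card_insert_of_notMem hj]
    have haj : 0 ≤ a j := ha j (Finset.mem_insert_self j t)
    have ha' : ∀ i ∈ t, 0 ≤ a i := fun i hi => ha i (Finset.mem_insert_of_mem hi)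
    have expand : (X - C (a j)) * ∏ i ∈ t, (X - C (a i)) =
        X * ∏ i ∈ t, (X - C (a i)) - C (a j) * ∏ i ∈ t, (X - C (a i)) := by ring
    rw [expand]
    rcases s with _|s
    · simp only [coeff_sub, coeff_C_mul, mul_comm, coeff_X_mul_zero]
      have h0 := ih ha' 0
      have e : ∀ c : ℝ, (-1:ℝ)^(t.card+1+0) * (0 - a j * c) = a j * ((-1:ℝ)^(t.card+0) * c) := by
        intro c; ring
      rw [e]; exact mul_nonneg haj h0
    · rw [coeff_sub, coeff_X_mul, coeff_C_mul]
      have h1 := ih ha' s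
      have h2 := ih ha' (s+1)
      have e : ∀ c d : ℝ, (-1:ℝ)^(t.card+1+(s+1)) * (c - a j * d)
          = (-1:ℝ)^(t.card+s) * c + a j * ((-1:ℝ)^(t.card+(s+1)) * d) := by intro c d; ring
      rw [e]; exact add_nonneg h1 (mul_nonneg haj h2)

lemma denom_sign (y : ℕ → ℝ) (N : ℕ) (hanti : ∀ i j, i < j → j ≤ N → y j < y i)
    (j : ℕ) (hj : j ≤ N) :
    0 < (-1:ℝ)^j * ∏ i ∈ (Finset.range (N+1)).erase j, (y j - y i) := by
  have hsplit : (Finset.range (N+1)).erase j =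
      Finset.range j ∪ Finset.Ico (j+1) (N+1) := by
    ext i
    simp only [Finset.mem_erase, Finset.mem_range, Finset.mem_union, Finset.mem_Ico]
    omega
  have hdisj : Disjoint (Finset.range j) (Finset.Ico (j+1) (N+1)) := by
    rw [Finset.disjoint_left]
    intro i hi hi'
    simp only [Finset.mem_range] at hi
    simp only [Finset.mem_Ico] at hi'
    omega
  rw [hsplit, Finset.prod_union hdisj, ← mul_assoc]
  have h1 : ∏ i ∈ Finset.range j, (y i - y j) =
      (-1:ℝ)^j * ∏ i ∈ Finset.range j, (y j - y i) := by
    calc ∏ i ∈ Finset.range j, (y i - y j)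
        = ∏ i ∈ Finset.range j, (-1) * (y j - y i) :=
          Finset.prod_congr rfl (fun i hi => by ring)
      _ = (∏ _i ∈ Finset.range j, (-1:ℝ)) * ∏ i ∈ Finset.range j, (y j - y i) :=
          Finset.prod_mul_distrib
      _ = (-1:ℝ)^j * ∏ i ∈ Finset.range j, (y j - y i) := by
          rw [Finset.prod_const, Finset.card_range]
  rw [← h1]
  apply mul_pos
  · apply Finset.prod_pos
    intro i hi
    simp only [Finset.mem_range] at hi
    exact sub_pos.mpr (hanti i j hi hj)
  · apply Finset.prod_pos
    intro i hi
    simp only [Finset.mem_Ico] at hi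
    exact sub_pos.mpr (hanti j i (by omega) (by omega))

lemma main_interp (N : ℕ) (y : ℕ → ℝ) (μ : ℕ → ℝ)
    (hy0 : ∀ j ≤ N, 0 ≤ y j)
    (hanti : ∀ i j, i < j → j ≤ N → y j < y i)
    (R S : Polynomial ℝ) (hR : R.natDegree ≤ N) (hS : S.natDegree ≤ N)
    (hRmu : ∀ j ≤ N, |R.eval (y j)| ≤ μ j)
    (hSmu : ∀ j ≤ N, S.eval (y j) = (-1:ℝ)^j * μ j)
    (s : ℕ) : |R.coeff s| ≤ |S.coeff s| := by
  classical
  set t : Finset ℕ := Finset.range (N+1) with ht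
  have hinj : Set.InjOn y t := by
    intro i hi j hj hij
    simp only [ht, Finset.coe_range, Set.mem_Iio] at hi hj
    by_contra h
    rcases lt_or_gt_of_ne h with h' | h'
    · exact absurd hij (ne_of_gt (hanti i j h' (by omega)))
    · exact absurd hij (ne_of_lt (hanti j i h' (by omega)))
  have hcard : #t = N + 1 := Finset.card_range (N+1)
  have hdeglt : ∀ f : Polynomial ℝ, f.natDegree ≤ N → f.degree < (#t : ℕ) := by
    intro f hf
    refine lt_of_le_of_lt Polynomial.degree_le_natDegree ?_
    rw [hcard]
    exact_mod_cast Nat.lt_succ_of_le hf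
  -- abbreviations
  set A : ℕ → ℝ := fun j =>
    (∏ i ∈ t.erase j, (y j - y i))⁻¹ * (∏ i ∈ t.erase j, (X - C (y i))).coeff s with hA
  have hbasis : ∀ j, (Lagrange.basis t y j).coeff s = A j := by
    intro j
    have : Lagrange.basis t y j =
        C ((∏ i ∈ t.erase j, (y j - y i))⁻¹) * ∏ i ∈ t.erase j, (X - C (y i)) := by
      rw [Lagrange.basis]
      simp_rw [Lagrange.basisDivisor]
      rw [Finset.prod_mul_distrib, ← map_prod, Finset.prod_inv_distrib]
    rw [this, coeff_C_mul]
  have hcoeff : ∀ f : Polynomial ℝ, f.natDegree ≤ N →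
      f.coeff s = ∑ j ∈ t, f.eval (y j) * A j := by
    intro f hf
    conv_lhs => rw [Lagrange.eq_interpolate hinj (hdeglt f hf)]
    rw [Lagrange.interpolate_apply, Polynomial.finset_sum_coeff]
    exact Finset.sum_congr rfl (fun j hj => by rw [coeff_C_mul, hbasis j])
  -- sign facts
  have hAj : ∀ j ∈ t, |A j| = (-1:ℝ)^(N+s) * ((-1:ℝ)^j * A j) := by
    intro j hj
    have hjN : j ≤ N := by simpa [ht, Nat.lt_succ] using hj
    have hd := denom_sign y N hanti j hjN
    have hcarde : #(t.erase j) = N := by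
      rw [Finset.card_erase_of_mem hj, hcard]
      omega
    have hs0 : 0 ≤ (-1:ℝ)^(N + s) * (∏ i ∈ t.erase j, (X - C (y i))).coeff s := by
      have := prodXsubC_sign y (t.erase j)
        (fun i hi => hy0 i (by
          have := Finset.mem_of_mem_erase hi
          simpa [ht, Nat.lt_succ] using this)) s
      rwa [hcarde] at this
    have hdinv : 0 < (-1:ℝ)^j * (∏ i ∈ t.erase j, (y j - y i))⁻¹ := by
      have h2 : (0:ℝ) < ((-1:ℝ)^j * ∏ i ∈ t.erase j, (y j - y i))⁻¹ := inv_pos.mpr hd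
      have h3 : ((-1:ℝ)^j * ∏ i ∈ t.erase j, (y j - y i))⁻¹ =
          (-1:ℝ)^j * (∏ i ∈ t.erase j, (y j - y i))⁻¹ := by
        rw [mul_inv]
        congr 1
        rw [← inv_pow, inv_neg, inv_one]
      rwa [h3] at h2
    have hprod : 0 ≤ (-1:ℝ)^(N+s) * ((-1:ℝ)^j * A j) := by
      have := mul_nonneg (le_of_lt hdinv) hs0
      calc (0:ℝ) ≤ ((-1:ℝ)^j * (∏ i ∈ t.erase j, (y j - y i))⁻¹) *
            ((-1:ℝ)^(N + s) * (∏ i ∈ t.erase j, (X - C (y i))).coeff s) := this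
        _ = (-1:ℝ)^(N+s) * ((-1:ℝ)^j * A j) := by rw [hA]; ring
    rw [← abs_of_nonneg hprod]
    simp [abs_mul, abs_pow]
  have hmu0 : ∀ j ∈ t, 0 ≤ μ j := by
    intro j hj
    have hjN : j ≤ N := by simpa [ht, Nat.lt_succ] using hj
    exact (abs_nonneg _).trans (hRmu j hjN)
  calc |R.coeff s| = |∑ j ∈ t, R.eval (y j) * A j| := by rw [hcoeff R hR]
    _ ≤ ∑ j ∈ t, |R.eval (y j) * A j| := Finset.abs_sum_le_sum_abs _ _
    _ = ∑ j ∈ t, |R.eval (y j)| * |A j| := by simp [abs_mul]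
    _ ≤ ∑ j ∈ t, μ j * |A j| := by
        refine Finset.sum_le_sum (fun j hj => ?_)
        have hjN : j ≤ N := by simpa [ht, Nat.lt_succ] using hj
        exact mul_le_mul_of_nonneg_right (hRmu j hjN) (abs_nonneg _)
    _ = (-1:ℝ)^(N+s) * S.coeff s := by
        rw [hcoeff S hS, Finset.mul_sum]
        refine Finset.sum_congr rfl (fun j hj => ?_)
        have hjN : j ≤ N := by simpa [ht, Nat.lt_succ] using hj
        rw [hAj j hj, hSmu j hjN]
        ring
    _ ≤ |(-1:ℝ)^(N+s) * S.coeff s| := le_abs_self _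
    _ = |S.coeff s| := by
        rw [abs_mul, abs_pow, abs_neg, abs_one, one_pow, one_mul]

noncomputable def compress (n : ℕ) (Q : Polynomial ℝ) : Polynomial ℝ :=
  ∑ s ∈ Finset.range (n/2 + 1), C (Q.coeff (2*s + n % 2)) * X^s

lemma compress_coeff (n : ℕ) (Q : Polynomial ℝ) (s : ℕ) (hs : s ≤ n/2) :
    (compress n Q).coeff s = Q.coeff (2*s + n % 2) := by
  rw [compress, Polynomial.finset_sum_coeff]
  rw [Finset.sum_eq_single s]
  · simp [coeff_X_pow]
  · intro b _ hbs
    simp [coeff_X_pow, Ne.symm hbs]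
  · intro h
    exact absurd (Finset.mem_range.mpr (Nat.lt_succ_of_le hs)) h

lemma compress_natDegree (n : ℕ) (Q : Polynomial ℝ) :
    (compress n Q).natDegree ≤ n/2 := by
  refine (Polynomial.natDegree_sum_le _ _).trans ?_
  rw [Finset.fold_max_le]
  refine ⟨Nat.zero_le _, fun s hs => ?_⟩
  refine (Polynomial.natDegree_C_mul_X_pow_le _ _).trans ?_
  simpa [Nat.lt_succ] using hs

lemma compress_eval (n : ℕ) (Q : Polynomial ℝ) (hQ : Q.natDegree ≤ n + 1) (x : ℝ) :
    x^(n % 2) * (compress n Q).eval (x^2) = (Q.eval x + (-1:ℝ)^n * Q.eval (-x))/2 := by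
  have hlt : Q.natDegree < n + 2 := by omega
  rw [Polynomial.eval_eq_sum_range' hlt (x := x), Polynomial.eval_eq_sum_range' hlt (x := -x)]
  rw [compress, Polynomial.eval_finset_sum, Finset.mul_sum, Finset.mul_sum,
    ← Finset.sum_add_distrib, Finset.sum_div]
  have hfil : ∑ k ∈ Finset.range (n+2),
      (Q.coeff k * x^k + (-1:ℝ)^n * (Q.coeff k * (-x)^k)) / 2 =
      ∑ k ∈ (Finset.range (n+2)).filter (fun k => k % 2 = n % 2),
      (Q.coeff k * x^k + (-1:ℝ)^n * (Q.coeff k * (-x)^k)) / 2 := by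
    symm
    refine Finset.sum_filter_of_ne (fun k _ hne => ?_)
    by_contra hpar
    apply hne
    have hnk : Odd (n + k) := by rw [Nat.odd_iff]; omega
    have h1 : ((-1:ℝ))^n * (-x)^k = -x^k := by
      rw [neg_pow x, ← mul_assoc, ← pow_add, Odd.neg_one_pow hnk]
      ring
    rw [mul_left_comm ((-1:ℝ)^n), h1]
    ring
  rw [hfil]
  refine Finset.sum_nbij' (fun s => 2*s + n % 2) (fun k => k / 2) ?_ ?_ ?_ ?_ ?_ <;>
    intro a ha <;>
    simp only [Finset.mem_filter, Finset.mem_range] at ha ⊢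
  · omega
  · omega
  · omega
  · omega
  · have hnk : Even (n + (2*a + n % 2)) := by rw [Nat.even_iff]; omega
    have h1 : ((-1:ℝ))^n * (-x)^(2*a + n % 2) = x^(2*a + n % 2) := by
      rw [neg_pow x, ← mul_assoc, ← pow_add, Even.neg_one_pow hnk, one_mul]
    rw [mul_left_comm ((-1:ℝ)^n), h1]
    rw [eval_mul, eval_C, eval_pow, eval_X, ← pow_mul, pow_add, mul_comm 2 a]
    ring

lemma T_cast_succ (n : ℕ) : ((n:ℤ) + 2) = (((n+2:ℕ)):ℤ) := by push_cast; ring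

lemma T_natDegree_le (n : ℕ) : (Polynomial.Chebyshev.T ℝ (n:ℤ)).natDegree ≤ n := by
  induction n using Nat.twoStepInduction with
  | zero => simp [Polynomial.Chebyshev.T_zero]
  | one => simp [Polynomial.Chebyshev.T_one]
  | more n ih1 ih2 =>
    rw [← T_cast_succ, Polynomial.Chebyshev.T_add_two]
    refine (Polynomial.natDegree_sub_le _ _).trans ?_
    refine max_le ?_ (by omega)
    have h2 : (2*X*(Polynomial.Chebyshev.T ℝ ((n:ℤ)+1)) : Polynomial ℝ) =
        C 2 * (X * Polynomial.Chebyshev.T ℝ ((n:ℤ)+1)) := by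
      rw [map_ofNat]; ring
    rw [h2]
    refine (Polynomial.natDegree_C_mul_le _ _).trans ?_
    refine (Polynomial.natDegree_mul_le).trans ?_
    have : ((n:ℤ)+1) = (((n+1:ℕ)):ℤ) := by push_cast; ring
    rw [this]
    have := ih1
    simp only [Polynomial.natDegree_X]
    omega

lemma T_coeff_bound (n : ℕ) (k : ℕ) :
    |(Polynomial.Chebyshev.T ℝ (n:ℤ)).coeff k| ≤ 3^n := by
  induction n using Nat.twoStepInduction generalizing k with
  | zero =>
    simp only [Nat.cast_zero, Polynomial.Chebyshev.T_zero, pow_zero]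
    rcases k with _|k <;> simp [coeff_one]
  | one =>
    rw [show ((1:ℕ):ℤ) = 1 from rfl, Polynomial.Chebyshev.T_one, coeff_X]
    split <;> norm_num
  | more n ih1 ih2 =>
    rw [← T_cast_succ, Polynomial.Chebyshev.T_add_two]
    have h2 : (2*X*(Polynomial.Chebyshev.T ℝ ((n:ℤ)+1)) : Polynomial ℝ) =
        C 2 * (X * Polynomial.Chebyshev.T ℝ ((n:ℤ)+1)) := by
      rw [map_ofNat]; ring
    rw [h2, coeff_sub, coeff_C_mul]
    have hcast : ((n:ℤ)+1) = (((n+1:ℕ)):ℤ) := by push_cast; ring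
    have hX : |(X * Polynomial.Chebyshev.T ℝ ((n:ℤ)+1)).coeff k| ≤ 3^(n+1) := by
      rcases k with _|k
      · have h0 : (X * Polynomial.Chebyshev.T ℝ ((n:ℤ)+1)).coeff 0 = 0 := by
          simp [mul_comm X]
        rw [h0, abs_zero]
        positivity
      · rw [Polynomial.coeff_X_mul, hcast]
        exact ih2 k
    have h1 := ih1 k
    calc |2 * (X * Polynomial.Chebyshev.T ℝ ((n:ℤ)+1)).coeff k
          - (Polynomial.Chebyshev.T ℝ (n:ℤ)).coeff k|
        ≤ 2 * |(X * Polynomial.Chebyshev.T ℝ ((n:ℤ)+1)).coeff k|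
          + |(Polynomial.Chebyshev.T ℝ (n:ℤ)).coeff k| := by
          have h := abs_sub (2 * (X * Polynomial.Chebyshev.T ℝ ((n:ℤ)+1)).coeff k)
            ((Polynomial.Chebyshev.T ℝ (n:ℤ)).coeff k)
          rw [abs_mul, abs_two] at h
          exact h
      _ ≤ 2 * 3^(n+1) + 3^n := by
          refine add_le_add (by linarith [hX]) h1
      _ ≤ 3^(n+2) := by ring_nf; nlinarith [pow_pos (by norm_num : (0:ℝ) < 3) n]

lemma key' (n : ℕ) (P : Polynomial ℝ) (hdeg : P.natDegree ≤ n + 1)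
    (hbd : ∀ x ∈ Set.Icc (-1:ℝ) 1, |P.eval x| ≤ 1) (m : ℕ) (hm : m ≤ n)
    (hpar : m % 2 = n % 2) :
    |P.coeff m| ≤ |(Polynomial.Chebyshev.T ℝ (n:ℤ)).coeff m| := by
  rcases Nat.eq_zero_or_pos n with hn | hn
  · subst hn
    interval_cases m
    rw [Polynomial.coeff_zero_eq_eval_zero]
    have h0 := hbd 0 (by constructor <;> norm_num)
    simpa [Polynomial.Chebyshev.T_zero, coeff_one] using h0
  have hnR : (0:ℝ) < n := by exact_mod_cast hn
  have pi_pos := Real.pi_pos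
  set N : ℕ := n / 2 with hN
  set r : ℕ := n % 2 with hr
  set θ : ℕ → ℝ := fun j => j * Real.pi / n with hθ
  set xx : ℕ → ℝ := fun j => Real.cos (θ j) with hxx
  set y : ℕ → ℝ := fun j => (xx j)^2 with hy
  set μ : ℕ → ℝ := fun j => ((xx j)^r)⁻¹ with hμ
  -- basic facts about the nodes
  have hθ0 : ∀ j : ℕ, 0 ≤ θ j := fun j => by
    apply div_nonneg (mul_nonneg (Nat.cast_nonneg j) (le_of_lt pi_pos)) (le_of_lt hnR)
  have hθhalf : ∀ j ≤ N, θ j ≤ Real.pi / 2 := by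
    intro j hj
    rw [hθ, div_le_div_iff₀ hnR (by norm_num)]
    have : (j:ℝ) * 2 ≤ n := by
      have : 2 * j ≤ n := by omega
      exact_mod_cast by linarith [(by exact_mod_cast this : (2*j:ℝ) ≤ n)]
    nlinarith
  have hx0 : ∀ j ≤ N, 0 ≤ xx j := by
    intro j hj
    apply Real.cos_nonneg_of_mem_Icc
    constructor
    · linarith [hθ0 j]
    · exact hθhalf j hj
  have hxle : ∀ j, xx j ∈ Set.Icc (-1:ℝ) 1 :=
    fun j => ⟨Real.neg_one_le_cos _, Real.cos_le_one _⟩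
  have hy0 : ∀ j ≤ N, 0 ≤ y j := fun j _ => sq_nonneg _
  have hanti : ∀ i j, i < j → j ≤ N → y j < y i := by
    intro i j hij hj
    have hθij : θ i < θ j := by
      rw [hθ]
      have hcast : (i:ℝ) < j := by exact_mod_cast hij
      have hmul : (i:ℝ) * Real.pi < (j:ℝ) * Real.pi :=
        mul_lt_mul_of_pos_right hcast pi_pos
      exact (div_lt_div_iff_of_pos_right hnR).mpr hmul
    have hcos : xx j < xx i :=
      Real.cos_lt_cos_of_nonneg_of_le_pi (hθ0 i)
        ((hθhalf j hj).trans (by linarith)) hθij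
    exact pow_lt_pow_left₀ hcos (hx0 j hj) (by norm_num)
  -- values of T at the nodes
  have hcosjpi : ∀ j : ℕ, Real.cos (j * Real.pi) = (-1:ℝ)^j := by
    intro j
    simpa using Real.cos_nat_mul_pi_sub 0 j
  have hTx : ∀ j : ℕ, (Polynomial.Chebyshev.T ℝ (n:ℤ)).eval (xx j) = (-1:ℝ)^j := by
    intro j
    rw [hxx]
    show (Polynomial.Chebyshev.T ℝ (n:ℤ)).eval (Real.cos (θ j)) = (-1:ℝ)^j
    rw [Polynomial.Chebyshev.T_real_cos (θ j) (n:ℤ)]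
    have harg : ((n:ℤ):ℝ) * θ j = j * Real.pi := by
      rw [hθ]
      push_cast
      field_simp
    rw [harg, hcosjpi j]
  have hTnegx : ∀ j : ℕ, (Polynomial.Chebyshev.T ℝ (n:ℤ)).eval (-(xx j)) =
      (-1:ℝ)^n * (-1:ℝ)^j := by
    intro j
    rw [hxx]
    have hneg : -(Real.cos (θ j)) = Real.cos (Real.pi - θ j) := by
      rw [Real.cos_pi_sub]
    show (Polynomial.Chebyshev.T ℝ (n:ℤ)).eval (-Real.cos (θ j)) = (-1:ℝ)^n * (-1:ℝ)^j
    rw [hneg, Polynomial.Chebyshev.T_real_cos (Real.pi - θ j) (n:ℤ)]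
    have harg : ((n:ℤ):ℝ) * (Real.pi - θ j) = n * Real.pi - j * Real.pi := by
      rw [hθ]
      push_cast
      field_simp
    rw [harg, Real.cos_nat_mul_pi_sub, hcosjpi j]
  -- positivity of xx j ^ r
  have hxrpos : ∀ j ≤ N, 0 < (xx j)^r := by
    intro j hj
    rcases Nat.even_or_odd n with he | ho
    · rw [Nat.even_iff] at he
      have : r = 0 := by omega
      rw [this, pow_zero]; norm_num
    · rw [Nat.odd_iff] at ho
      have hr1 : r = 1 := by omega
      rw [hr1, pow_one, hxx]
      apply Real.cos_pos_of_mem_Ioo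
      constructor
      · linarith [hθ0 j]
      · -- θ j < π/2 since 2j ≤ n - 1 < n
        rw [hθ, div_lt_div_iff₀ hnR (by norm_num : (0:ℝ) < 2)]
        have h2j : 2 * j + 1 ≤ n := by omega
        have : (2 * (j:ℝ)) + 1 ≤ n := by exact_mod_cast h2j
        nlinarith
  -- the compressed polynomials
  set R : Polynomial ℝ := compress n P with hR
  set S : Polynomial ℝ := compress n (Polynomial.Chebyshev.T ℝ (n:ℤ)) with hS
  have hTdeg : (Polynomial.Chebyshev.T ℝ (n:ℤ)).natDegree ≤ n + 1 :=
    (T_natDegree_le n).trans (by omega)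
  have hSval : ∀ j ≤ N, S.eval (y j) = (-1:ℝ)^j * μ j := by
    intro j hj
    have hev := compress_eval n (Polynomial.Chebyshev.T ℝ (n:ℤ)) hTdeg (xx j)
    rw [hTx j, hTnegx j] at hev
    have hsimp : ((-1:ℝ)^j + (-1:ℝ)^n * ((-1:ℝ)^n * (-1:ℝ)^j))/2 = (-1:ℝ)^j := by
      rw [← mul_assoc, ← pow_add]
      have : Even (n + n) := ⟨n, rfl⟩
      rw [Even.neg_one_pow this, one_mul]
      ring
    rw [hsimp] at hev
    have hxr := hxrpos j hj
    show S.eval (xx j ^ 2) = (-1:ℝ)^j * ((xx j)^r)⁻¹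
    field_simp
    linear_combination hev
  have hRmu : ∀ j ≤ N, |R.eval (y j)| ≤ μ j := by
    intro j hj
    have hev := compress_eval n P hdeg (xx j)
    have hb1 := hbd (xx j) (hxle j)
    have hb2 := hbd (-(xx j)) (by
      have := hxle j
      constructor <;> [linarith [this.2]; linarith [this.1]])
    have habs : |(xx j)^r * R.eval (y j)| ≤ 1 := by
      rw [hev]
      rw [abs_div]
      have : |(2:ℝ)| = 2 := by norm_num
      rw [this]
      rw [div_le_one (by norm_num : (0:ℝ) < 2)]
      calc |P.eval (xx j) + (-1:ℝ)^n * P.eval (-(xx j))|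
          ≤ |P.eval (xx j)| + |(-1:ℝ)^n * P.eval (-(xx j))| := abs_add_le _ _
        _ ≤ 1 + 1 := by
            refine add_le_add hb1 ?_
            rw [abs_mul, abs_pow, abs_neg, abs_one, one_pow, one_mul]
            exact hb2
        _ = 2 := by norm_num
    have hxr := hxrpos j hj
    rw [abs_mul, abs_of_nonneg (le_of_lt hxr)] at habs
    show |R.eval (xx j ^ 2)| ≤ ((xx j)^r)⁻¹
    rw [← one_div, le_div_iff₀ hxr]
    rw [mul_comm] at habs
    exact habs
  have hRdeg : R.natDegree ≤ N := compress_natDegree n P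
  have hSdeg : S.natDegree ≤ N := compress_natDegree n _
  have hmain := main_interp N y μ hy0 hanti R S hRdeg hSdeg hRmu hSval (m / 2)
  have hRc : R.coeff (m/2) = P.coeff m := by
    rw [hR, compress_coeff n P (m/2) (by omega)]
    congr 1
    omega
  have hSc : S.coeff (m/2) = (Polynomial.Chebyshev.T ℝ (n:ℤ)).coeff m := by
    rw [hS, compress_coeff n _ (m/2) (by omega)]
    congr 1
    omega
  rwa [hRc, hSc] at hmain

/-- Markov-type coefficient bound (Qazi–Rahman): if `|P(x)| ≤ 1` on `[−1,1]` and
`deg P ≤ n`, then the coefficients of `P` of index `n − 2ν` are dominated in absolute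
value by the corresponding coefficients of the Chebyshev polynomial `T_n`, the
coefficients of index `n − 1 − 2ν` by those of `T_{n−1}`, and in particular every
coefficient is bounded by `2^{3n}`. -/
theorem coeff_bound_of_bounded_on_Icc (n : ℕ) (P : Polynomial ℝ)
    (hdeg : P.natDegree ≤ n) (hbd : ∀ x ∈ Set.Icc (-1 : ℝ) 1, |P.eval x| ≤ 1) :
    (∀ ν : ℕ, 2 * ν ≤ n →
      |P.coeff (n - 2 * ν)| ≤ |(Polynomial.Chebyshev.T ℝ (n : ℤ)).coeff (n - 2 * ν)|) ∧
    (∀ ν : ℕ, 1 + 2 * ν ≤ n →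
      |P.coeff (n - 1 - 2 * ν)| ≤
        |(Polynomial.Chebyshev.T ℝ ((n : ℤ) - 1)).coeff (n - 1 - 2 * ν)|) ∧
    (∀ k : ℕ, |P.coeff k| ≤ 2 ^ (3 * n)) := by
  have hc1 : ∀ ν : ℕ, 2 * ν ≤ n →
      |P.coeff (n - 2 * ν)| ≤ |(Polynomial.Chebyshev.T ℝ (n : ℤ)).coeff (n - 2 * ν)| := by
    intro ν hν
    exact key' n P (by omega) hbd (n - 2 * ν) (by omega) (by omega)
  have hc2 : ∀ ν : ℕ, 1 + 2 * ν ≤ n →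
      |P.coeff (n - 1 - 2 * ν)| ≤
        |(Polynomial.Chebyshev.T ℝ ((n : ℤ) - 1)).coeff (n - 1 - 2 * ν)| := by
    intro ν hν
    have h := key' (n - 1) P (by omega) hbd (n - 1 - 2 * ν) (by omega) (by omega)
    have hcast : ((n:ℤ) - 1) = (((n - 1 : ℕ)):ℤ) := by omega
    rw [hcast]
    exact h
  refine ⟨hc1, hc2, ?_⟩
  intro k
  have h38 : ((3:ℝ))^n ≤ 2 ^ (3 * n) := by
    rw [pow_mul]
    norm_num
    exact pow_le_pow_left₀ (by norm_num) (by norm_num) n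
  rcases le_or_gt k n with hk | hk
  · by_cases hp : (n - k) % 2 = 0
    · have h := hc1 ((n - k) / 2) (by omega)
      have hidx : n - 2 * ((n - k) / 2) = k := by omega
      rw [hidx] at h
      exact h.trans ((T_coeff_bound n k).trans h38)
    · have h := hc2 ((n - 1 - k) / 2) (by omega)
      have hidx : n - 1 - 2 * ((n - 1 - k) / 2) = k := by omega
      rw [hidx] at h
      have hcast : ((n:ℤ) - 1) = (((n - 1 : ℕ)):ℤ) := by omega
      rw [hcast] at h
      refine h.trans ((T_coeff_bound (n-1) k).trans ?_)
      refine le_trans ?_ h38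
      exact pow_le_pow_right₀ (by norm_num) (by omega)
  · rw [Polynomial.coeff_eq_zero_of_natDegree_lt (lt_of_le_of_lt hdeg hk), abs_zero]
    positivity
end
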